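/- arXiv:1411.1782 — 2 statements merged into one kernel-verified Lean document; each statement's English description precedes it below -/
import Mathlib

section
/- Let P be an abstract polytope of rank d that is in class 2_I, and let j ∈ {0, …, d−1} with j ∉ I. Then Γ(P) acts transitively on the chains of cotype {j}: for any two chains Ψ and Ω in P, each containing exactly one element of every rank in {−1, 0, …, d} except rank j, there is an automorphism γ ∈ Γ(P) with γ(Ψ) = Ω. -/
/-! Generic definitions about flags, flag orbits, and abstract polytopes. -/

variable {α : Type*} [PartialOrder α]

/-- Two flags (maximal chains) are in the same orbit of the automorphism group
(the group of order automorphisms) if some order automorphism maps one onto the other. -/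
def SameFlagOrbit (Φ Ψ : Flag α) : Prop :=
  ∃ γ : α ≃o α, γ '' (Φ : Set α) = (Ψ : Set α)

/-- The automorphism group has exactly two orbits on the flags. -/
def TwoFlagOrbits (α : Type*) [PartialOrder α] : Prop :=
  ∃ Φ Ψ : Flag α, ¬ SameFlagOrbit Φ Ψ ∧
    ∀ Ω : Flag α, SameFlagOrbit Ω Φ ∨ SameFlagOrbit Ω Ψ

/-- `Ψ` is the flag `Φ^i`: it differs from `Φ` in exactly the rank-`i` element
(with respect to the rank function `rk`). -/
def IsIAdjacent (rk : α → ℤ) (i : ℤ) (Φ Ψ : Flag α) : Prop :=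
  Φ ≠ Ψ ∧ ∀ x : α, rk x ≠ i → (x ∈ Φ ↔ x ∈ Ψ)

/-- A two-orbit polytope (with rank function `rk`, adjacency indices `0, …, n-1`)
is in class `2_I` if, for every flag `Φ` and every `i < n`, the `i`-adjacent flag `Φ^i`
lies in the same orbit as `Φ` exactly when `i ∈ I`. -/
def InClass (rk : α → ℤ) (n : ℕ) (I : Set ℕ) : Prop :=
  TwoFlagOrbits α ∧
    ∀ (Φ Ψ : Flag α) (i : ℕ), i < n → IsIAdjacent rk i Φ Ψ →
      (SameFlagOrbit Φ Ψ ↔ i ∈ I)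

/-- An abstract polytope of rank `d`: a bounded poset, graded by a rank function `rk`
taking values `-1, 0, …, d`, in which every flag (maximal chain) has exactly one element
of each rank, satisfying the diamond condition and strong flag-connectivity. -/
structure IsAbstractPolytope (α : Type*) [PartialOrder α] [BoundedOrder α]
    (rk : α → ℤ) (d : ℕ) : Prop where
  rk_bot : rk ⊥ = -1
  rk_top : rk ⊤ = d
  rk_strictMono : StrictMono rk
  rk_cover : ∀ x y : α, x ⋖ y → rk y = rk x + 1
  flag_ranks : ∀ (Φ : Flag α) (i : ℤ), -1 ≤ i → i ≤ d → ∃! x, x ∈ Φ ∧ rk x = i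
  diamond : ∀ x y : α, x < y → rk y = rk x + 2 →
    ∃ a b : α, a ≠ b ∧ ∀ z : α, (x < z ∧ z < y) ↔ (z = a ∨ z = b)
  connected : ∀ Φ Ψ : Flag α, ∃ (n : ℕ) (c : Fin (n + 1) → Flag α),
    c 0 = Φ ∧ c (Fin.last n) = Ψ ∧
    (∀ k : Fin n, ∃ i : ℤ, IsIAdjacent rk i (c k.castSucc) (c k.succ)) ∧
    (∀ k, (Φ : Set α) ∩ (Ψ : Set α) ⊆ (c k : Set α))
/-- A chain of cotype `{j}`: a chain in `P` containing exactly one element of every rank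
in `{-1, 0, …, d}` except rank `j`, and nothing else. -/
def IsCotypeChain {α : Type*} [PartialOrder α] (rk : α → ℤ) (d : ℕ) (j : ℤ)
    (C : Set α) : Prop :=
  IsChain (· ≤ ·) C ∧
  (∀ x ∈ C, -1 ≤ rk x ∧ rk x ≤ d ∧ rk x ≠ j) ∧
  (∀ i : ℤ, -1 ≤ i → i ≤ d → i ≠ j → ∃! x, x ∈ C ∧ rk x = i)


/-!
Extend `Ψ` to a flag `Φ₀` by any element of rank `j`. By the diamond condition `Ω` lies in
exactly two flags `Φ` and `Φ'`, and these are `j`-adjacent, so as `j ∉ I` they lie in different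
orbits. With only two orbits, `Φ₀` lies in the orbit of one of them. Automorphisms preserve
rank, so an automorphism carrying `Φ₀` onto `Φ` or `Φ'` carries `Ψ`, the part of `Φ₀` outside
rank `j`, onto `Ω`.
-/

namespace SameFlagOrbit

variable {Φ Ψ Ω : Flag α}

theorem symm (h : SameFlagOrbit Φ Ψ) : SameFlagOrbit Ψ Φ := by
  obtain ⟨γ, hγ⟩ := h
  exact ⟨γ.symm, by rw [← hγ, γ.symm_image_image]⟩

theorem trans (h : SameFlagOrbit Φ Ψ) (h' : SameFlagOrbit Ψ Ω) : SameFlagOrbit Φ Ω := by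
  obtain ⟨γ, hγ⟩ := h
  obtain ⟨δ, hδ⟩ := h'
  exact ⟨γ.trans δ, by rw [OrderIso.coe_trans, Set.image_comp, hγ, hδ]⟩

end SameFlagOrbit

theorem TwoFlagOrbits.sameFlagOrbit_or (h : TwoFlagOrbits α) {Ψ Ω : Flag α}
    (hΨΩ : ¬ SameFlagOrbit Ψ Ω) (Φ : Flag α) : SameFlagOrbit Φ Ψ ∨ SameFlagOrbit Φ Ω := by
  obtain ⟨A, B, -, hall⟩ := h
  rcases hall Φ with hΦ | hΦ <;> rcases hall Ψ with hΨ | hΨ <;> rcases hall Ω with hΩ | hΩ <;>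
    first
    | exact .inl (hΦ.trans hΨ.symm)
    | exact .inr (hΦ.trans hΩ.symm)
    | exact absurd (hΨ.trans hΩ.symm) hΨΩ

theorem isIAdjacent_of_diff_eq {rk : α → ℤ} {i : ℤ} {Φ Ψ : Flag α} (hne : Φ ≠ Ψ)
    (h : (Φ : Set α) \ rk ⁻¹' {i} = (Ψ : Set α) \ rk ⁻¹' {i}) : IsIAdjacent rk i Φ Ψ :=
  ⟨hne, fun x hx => by simpa [hx] using Set.ext_iff.1 h x⟩

namespace IsChain

variable {β : Type*} [LinearOrder β] {f : α → β} {C : Set α} {x y : α}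

theorem le_of_apply_le (hC : IsChain (· ≤ ·) C) (hf : StrictMono f) (hx : x ∈ C) (hy : y ∈ C)
    (h : f x ≤ f y) : x ≤ y := by
  refine (hC.total hx hy).elim id fun hyx => ?_
  rcases hyx.lt_or_eq with hlt | rfl
  · exact absurd (hf hlt) h.not_gt
  · exact le_rfl

theorem lt_of_apply_lt (hC : IsChain (· ≤ ·) C) (hf : StrictMono f) (hx : x ∈ C) (hy : y ∈ C)
    (h : f x < f y) : x < y :=
  (hC.le_of_apply_le hf hx hy h.le).lt_of_ne fun hxy => h.ne (congrArg f hxy)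

theorem eq_of_apply_eq (hC : IsChain (· ≤ ·) C) (hf : StrictMono f) (hx : x ∈ C) (hy : y ∈ C)
    (h : f x = f y) : x = y :=
  (hC.le_of_apply_le hf hx hy h.le).antisymm (hC.le_of_apply_le hf hy hx h.ge)

end IsChain

namespace IsAbstractPolytope

variable [BoundedOrder α] {rk : α → ℤ} {d : ℕ}

theorem neg_one_le_rk (hP : IsAbstractPolytope α rk d) (x : α) : -1 ≤ rk x :=
  hP.rk_bot ▸ hP.rk_strictMono.monotone bot_le

theorem rk_le (hP : IsAbstractPolytope α rk d) (x : α) : rk x ≤ d :=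
  hP.rk_top ▸ hP.rk_strictMono.monotone le_top

theorem exists_covBy (hP : IsAbstractPolytope α rk d) {x : α} (hx : 0 ≤ rk x) : ∃ y, y ⋖ x := by
  obtain ⟨M, hM, hxM⟩ :=
    (Set.subsingleton_singleton (a := x)).isChain (r := (· ≤ ·)).exists_maxChain
  let Φ : Flag α := .ofIsMaxChain M hM
  obtain ⟨y, ⟨hyΦ, hyr⟩, -⟩ := hP.flag_ranks Φ (rk x - 1) (by omega) (by linarith [hP.rk_le x])
  refine ⟨y, Φ.chain_le.lt_of_apply_lt hP.rk_strictMono hyΦ (hxM rfl) (by omega),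
    fun z hyz hzx => ?_⟩
  have := hP.rk_strictMono hyz
  have := hP.rk_strictMono hzx
  omega

theorem rk_orderIso_apply (hP : IsAbstractPolytope α rk d) (γ : α ≃o α) (x : α) :
    rk (γ x) = rk x := by
  induction hn : (rk x + 1).toNat using Nat.strong_induction_on generalizing x with
  | _ n ih =>
    rcases (hP.neg_one_le_rk x).eq_or_lt with hx | hx
    · obtain rfl : x = ⊥ := by_contra fun hne =>
        (hP.rk_strictMono (bot_lt_iff_ne_bot.2 hne)).ne (hP.rk_bot.trans hx)
      rw [γ.map_bot]
    · obtain ⟨y, hyx⟩ := hP.exists_covBy (x := x) (by omega)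
      have := hP.rk_cover _ _ hyx
      have := hP.rk_cover _ _ ((apply_covBy_apply_iff γ).2 hyx)
      have := ih _ (by omega) y rfl
      omega

theorem image_rk_preimage (hP : IsAbstractPolytope α rk d) (γ : α ≃o α) (s : Set ℤ) :
    γ '' (rk ⁻¹' s) = rk ⁻¹' s := by
  rw [γ.image_eq_preimage_symm, ← Set.preimage_comp,
    show rk ∘ γ.symm = rk from funext (hP.rk_orderIso_apply γ.symm)]

end IsAbstractPolytope

section

variable [BoundedOrder α] {rk : α → ℤ} {d : ℕ}

theorem SameFlagOrbit.exists_image_diff_eq (hP : IsAbstractPolytope α rk d) {Φ Ψ : Flag α}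
    (h : SameFlagOrbit Φ Ψ) (j : ℤ) :
    ∃ γ : α ≃o α, γ '' ((Φ : Set α) \ rk ⁻¹' {j}) = (Ψ : Set α) \ rk ⁻¹' {j} := by
  obtain ⟨γ, hγ⟩ := h
  exact ⟨γ, by rw [Set.image_sdiff γ.injective, hγ, hP.image_rk_preimage]⟩

namespace IsCotypeChain

variable {j : ℤ} {C : Set α}

theorem exists_flag_diff_eq_of_isChain (hP : IsAbstractPolytope α rk d)
    (hC : IsCotypeChain rk d j C) {D : Set α} (hCD : C ⊆ D) (hD : IsChain (· ≤ ·) D) :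
    ∃ Φ : Flag α, D ⊆ Φ ∧ (Φ : Set α) \ rk ⁻¹' {j} = C := by
  obtain ⟨M, hM, hDM⟩ := hD.exists_maxChain
  let Φ : Flag α := .ofIsMaxChain M hM
  refine ⟨Φ, hDM, Set.Subset.antisymm (fun x ⟨hxΦ, hxj⟩ => ?_) fun x hx =>
    ⟨hDM (hCD hx), (hC.2.1 x hx).2.2⟩⟩
  obtain ⟨c, ⟨hcC, hcx⟩, -⟩ := hC.2.2 (rk x) (hP.neg_one_le_rk x) (hP.rk_le x) hxj
  rwa [Φ.chain_le.eq_of_apply_eq hP.rk_strictMono hxΦ (hDM (hCD hcC)) hcx.symm]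

theorem isChain_insert (hP : IsAbstractPolytope α rk d) (hC : IsCotypeChain rk d j C)
    {x y a : α} (hx : x ∈ C) (hy : y ∈ C) (hxr : rk x = j - 1) (hyr : rk y = j + 1)
    (hxa : x < a) (hay : a < y) : IsChain (· ≤ ·) (insert a C) := by
  refine hC.1.insert fun w hw _ => ?_
  rcases lt_or_gt_of_ne (hC.2.1 w hw).2.2 with h | h
  · exact .inr ((hC.1.le_of_apply_le hP.rk_strictMono hw hx (by omega)).trans hxa.le)
  · exact .inl (hay.le.trans (hC.1.le_of_apply_le hP.rk_strictMono hy hw (by omega)))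

/-- The two flags are the extensions of `C` by the two elements of the diamond between the
elements of `C` of ranks `j - 1` and `j + 1`. -/
theorem exists_isIAdjacent (hP : IsAbstractPolytope α rk d) (hj0 : 0 ≤ j) (hjd : j < d)
    (hC : IsCotypeChain rk d j C) :
    ∃ Φ Φ' : Flag α, IsIAdjacent rk j Φ Φ' ∧
      (Φ : Set α) \ rk ⁻¹' {j} = C ∧ (Φ' : Set α) \ rk ⁻¹' {j} = C := by
  obtain ⟨x, ⟨hx, hxr⟩, -⟩ := hC.2.2 (j - 1) (by omega) (by omega) (by omega)
  obtain ⟨y, ⟨hy, hyr⟩, -⟩ := hC.2.2 (j + 1) (by omega) (by omega) (by omega)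
  obtain ⟨a, b, hab, hmid⟩ :=
    hP.diamond x y (hC.1.lt_of_apply_lt hP.rk_strictMono hx hy (by omega)) (by omega)
  have extend : ∀ e, x < e ∧ e < y →
      ∃ Φ : Flag α, e ∈ Φ ∧ rk e = j ∧ (Φ : Set α) \ rk ⁻¹' {j} = C := by
    rintro e ⟨hxe, hey⟩
    obtain ⟨Φ, hΦ, hΦC⟩ := hC.exists_flag_diff_eq_of_isChain hP (Set.subset_insert e C)
      (hC.isChain_insert hP hx hy hxr hyr hxe hey)
    have := hP.rk_strictMono hxe
    have := hP.rk_strictMono hey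
    exact ⟨Φ, hΦ (Set.mem_insert e C), by omega, hΦC⟩
  obtain ⟨Φ, haΦ, har, hΦ⟩ := extend a ((hmid a).2 (.inl rfl))
  obtain ⟨Φ', hbΦ', hbr, hΦ'⟩ := extend b ((hmid b).2 (.inr rfl))
  refine ⟨Φ, Φ', isIAdjacent_of_diff_eq ?_ (hΦ.trans hΦ'.symm), hΦ, hΦ'⟩
  rintro rfl
  exact hab (Φ.chain_le.eq_of_apply_eq hP.rk_strictMono haΦ hbΦ' (har.trans hbr.symm))

end IsCotypeChain

end

/-- If `P` is an abstract polytope of rank `d` in class `2_I` and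
`j ∈ {0, …, d-1}` with `j ∉ I`, then `Γ(P)` acts transitively on the chains of
cotype `{j}`. -/
theorem transitive_on_cotype_chains {α : Type*} [PartialOrder α] [BoundedOrder α]
    (rk : α → ℤ) (d : ℕ) (hP : IsAbstractPolytope α rk d)
    (I : Set ℕ) (h2 : InClass rk d I)
    (j : ℕ) (hj : j < d) (hjI : j ∉ I)
    (Ψ Ω : Set α) (hΨ : IsCotypeChain rk d j Ψ) (hΩ : IsCotypeChain rk d j Ω) :
    ∃ γ : α ≃o α, γ '' Ψ = Ω := by
  obtain ⟨Φ₀, -, hΦ₀⟩ := hΨ.exists_flag_diff_eq_of_isChain hP subset_rfl hΨ.1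
  obtain ⟨Φ, Φ', hadj, hΦ, hΦ'⟩ := hΩ.exists_isIAdjacent hP (by positivity) (by exact_mod_cast hj)
  have hΦΦ' : ¬ SameFlagOrbit Φ Φ' := fun h => hjI ((h2.2 Φ Φ' j hj hadj).1 h)
  rw [← hΦ₀]
  rcases h2.1.sameFlagOrbit_or hΦΦ' Φ₀ with h | h
  · exact hΦ ▸ h.exists_image_diff_eq hP j
  · exact hΦ' ▸ h.exists_image_diff_eq hP j
end

section
/- Define sequences a, b, c of natural numbers by a₁ = 0, b₁ = 0, c₁ = 20 and, for n ≥ 1, a_{n+1} = a_n + 2b_n + 3c_n, b_{n+1} = 2a_n + 5b_n + 9c_n, c_{n+1} = 4a_n + 12b_n + 25c_n. Then for every n ≥ 1, the partial sum S_n = Σ_{k=1}^{n} (a_k + b_k + c_k) satisfies S_n = (5/7)·( (9/(2√14))·((15 + 4√14)^n − (15 − 4√14)^n) − 8n ). -/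
/-!
The recurrence matrix `M` has characteristic polynomial `(x - 1)(x² - 30x + 1)`, with roots
`1` and `λ, μ = 15 ± 4√14`. The row vector `(2, 2, -1)` is a left eigenvector for the eigenvalue
`1`, so `2aₙ + 2bₙ - cₙ = -20` for all `n ≥ 1`. Since `(1, 1, 1)(M² - 30M + 1) = -8 (2, 2, -1)`, the
totals `tₙ = aₙ + bₙ + cₙ` satisfy `tₙ₊₂ = 30 tₙ₊₁ - tₙ + 160`, and hence `Sₙ + 40n/7` satisfies
the homogeneous recurrence `uₙ₊₂ = 30 uₙ₊₁ - uₙ` with `u₀ = 0`, `u₁ = 180/7`. Its solution is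
`C (λⁿ - μⁿ)` with `C (λ - μ) = 180/7`.
-/

open Finset

theorem eq_mul_pow_add_mul_pow_of_two_step {R : Type*} [CommRing R] {u : ℕ → R} {x y A B : R}
    (h0 : u 0 = A + B) (h1 : u 1 = A * x + B * y)
    (h : ∀ n, u (n + 2) = (x + y) * u (n + 1) - x * y * u n) (n : ℕ) :
    u n = A * x ^ n + B * y ^ n := by
  induction n using Nat.twoStepInduction with
  | zero => simpa using h0
  | one => simpa using h1
  | more n ih₀ ih₁ => rw [h, ih₀, ih₁]; ring

theorem sum_Icc_add_two_of_two_step {R : Type*} [CommRing R] {t : ℕ → R} {p q : R}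
    (h2 : t 2 = (p - 1) * t 1 + q) (h : ∀ n, 1 ≤ n → t (n + 2) = p * t (n + 1) - t n + q)
    (n : ℕ) :
    ∑ k ∈ Icc 1 (n + 2), t k =
      p * ∑ k ∈ Icc 1 (n + 1), t k - ∑ k ∈ Icc 1 n, t k + (n + 1) * q := by
  induction n with
  | zero => simp [sum_Icc_succ_top, h2]; ring
  | succ n ih =>
    have e3 := sum_Icc_succ_top (by omega : 1 ≤ n + 3) t
    have e2 := sum_Icc_succ_top (by omega : 1 ≤ n + 2) t
    have e1 := sum_Icc_succ_top (by omega : 1 ≤ n + 1) t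
    push_cast
    linear_combination e3 - p * e2 + e1 + ih + h (n + 1) (by omega)

section TileRecurrence

variable {a b c : ℕ → ℕ}

theorem tile_invariant (ha1 : a 1 = 0) (hb1 : b 1 = 0) (hc1 : c 1 = 20)
    (ha : ∀ n : ℕ, 1 ≤ n → a (n + 1) = a n + 2 * b n + 3 * c n)
    (hb : ∀ n : ℕ, 1 ≤ n → b (n + 1) = 2 * a n + 5 * b n + 9 * c n)
    (hc : ∀ n : ℕ, 1 ≤ n → c (n + 1) = 4 * a n + 12 * b n + 25 * c n)
    {n : ℕ} (hn : 1 ≤ n) : c n = 2 * a n + 2 * b n + 20 := by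
  induction n, hn using Nat.le_induction with
  | base => omega
  | succ n hn ih => rw [ha n hn, hb n hn, hc n hn]; omega

theorem tile_total_two_step (ha1 : a 1 = 0) (hb1 : b 1 = 0) (hc1 : c 1 = 20)
    (ha : ∀ n : ℕ, 1 ≤ n → a (n + 1) = a n + 2 * b n + 3 * c n)
    (hb : ∀ n : ℕ, 1 ≤ n → b (n + 1) = 2 * a n + 5 * b n + 9 * c n)
    (hc : ∀ n : ℕ, 1 ≤ n → c (n + 1) = 4 * a n + 12 * b n + 25 * c n)
    {n : ℕ} (hn : 1 ≤ n) :
    ((a (n + 2) + b (n + 2) + c (n + 2) : ℕ) : ℝ) =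
      30 * ((a (n + 1) + b (n + 1) + c (n + 1) : ℕ) : ℝ) - ((a n + b n + c n : ℕ) : ℝ) + 160 := by
  have hinv := tile_invariant ha1 hb1 hc1 ha hb hc hn
  have key : a (n + 2) + b (n + 2) + c (n + 2) + (a n + b n + c n) =
      30 * (a (n + 1) + b (n + 1) + c (n + 1)) + 160 := by
    rw [ha (n + 1) (by omega), hb (n + 1) (by omega), hc (n + 1) (by omega),
      ha n hn, hb n hn, hc n hn]
    omega
  rw [← Nat.cast_inj (R := ℝ)] at key
  push_cast at key ⊢
  linarith

end TileRecurrence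

theorem eq_of_partial_sum_recurrence {S : ℕ → ℝ} (h0 : S 0 = 0) (h1 : S 1 = 20)
    (h : ∀ n, S (n + 2) = 30 * S (n + 1) - S n + (n + 1) * 160) (n : ℕ) :
    S n = (5 / 7) * ((9 / (2 * Real.sqrt 14)) *
        ((15 + 4 * Real.sqrt 14) ^ n - (15 - 4 * Real.sqrt 14) ^ n) - 8 * n) := by
  set r := Real.sqrt 14
  have hr : r ^ 2 = 14 := Real.sq_sqrt (by norm_num)
  have hr0 : r ≠ 0 := by positivity
  set C : ℝ := 5 / 7 * (9 / (2 * r))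
  have hu := eq_mul_pow_add_mul_pow_of_two_step (u := fun n ↦ S n + 40 * n / 7)
    (x := 15 + 4 * r) (y := 15 - 4 * r) (A := C) (B := -C) ?_ ?_ ?_ n
  · linear_combination hu
  · simp [h0]
  · simp only [C, h1]
    field_simp
    ring
  · intro n
    push_cast
    linear_combination h n - 16 * (S n + 40 * n / 7) * hr

theorem patch_tile_count_general (a b c : ℕ → ℕ)
    (ha1 : a 1 = 0) (hb1 : b 1 = 0) (hc1 : c 1 = 20)
    (ha : ∀ n : ℕ, 1 ≤ n → a (n + 1) = a n + 2 * b n + 3 * c n)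
    (hb : ∀ n : ℕ, 1 ≤ n → b (n + 1) = 2 * a n + 5 * b n + 9 * c n)
    (hc : ∀ n : ℕ, 1 ≤ n → c (n + 1) = 4 * a n + 12 * b n + 25 * c n)
    (n : ℕ) :
    ((∑ k ∈ Finset.Icc 1 n, (a k + b k + c k) : ℕ) : ℝ) =
      (5 / 7) * ((9 / (2 * Real.sqrt 14)) *
        ((15 + 4 * Real.sqrt 14) ^ n - (15 - 4 * Real.sqrt 14) ^ n) - 8 * n) := by
  have ht2 : ((a 2 + b 2 + c 2 : ℕ) : ℝ) = (30 - 1) * ((a 1 + b 1 + c 1 : ℕ) : ℝ) + 160 := by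
    rw [ha 1 le_rfl, hb 1 le_rfl, hc 1 le_rfl, ha1, hb1, hc1]; norm_num
  rw [Nat.cast_sum]
  apply eq_of_partial_sum_recurrence (S := fun n ↦ ∑ k ∈ Icc 1 n, ((a k + b k + c k : ℕ) : ℝ))
  · simp
  · simp [ha1, hb1, hc1]
  · exact sum_Icc_add_two_of_two_step ht2 fun n hn ↦ tile_total_two_step ha1 hb1 hc1 ha hb hc hn

/-- Let `a₁ = b₁ = 0`, `c₁ = 20`, and for `n ≥ 1` let
`a_{n+1} = aₙ + 2bₙ + 3cₙ`, `b_{n+1} = 2aₙ + 5bₙ + 9cₙ`, `c_{n+1} = 4aₙ + 12bₙ + 25cₙ`.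
Then the partial sums `Sₙ = Σ_{k=1}^n (a_k + b_k + c_k)` satisfy
`Sₙ = (5/7) ((9/(2√14)) ((15 + 4√14)ⁿ − (15 − 4√14)ⁿ) − 8n)`. -/
theorem patch_tile_count (a b c : ℕ → ℕ)
    (ha1 : a 1 = 0) (hb1 : b 1 = 0) (hc1 : c 1 = 20)
    (ha : ∀ n : ℕ, 1 ≤ n → a (n + 1) = a n + 2 * b n + 3 * c n)
    (hb : ∀ n : ℕ, 1 ≤ n → b (n + 1) = 2 * a n + 5 * b n + 9 * c n)
    (hc : ∀ n : ℕ, 1 ≤ n → c (n + 1) = 4 * a n + 12 * b n + 25 * c n)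
    (n : ℕ) (hn : 1 ≤ n) :
    ((∑ k ∈ Finset.Icc 1 n, (a k + b k + c k) : ℕ) : ℝ) =
      (5 / 7) * ((9 / (2 * Real.sqrt 14)) *
        ((15 + 4 * Real.sqrt 14) ^ n - (15 - 4 * Real.sqrt 14) ^ n) - 8 * n) :=
  patch_tile_count_general a b c ha1 hb1 hc1 ha hb hc n
end
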